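/- arXiv:2305.03037 — 2 statements merged into one kernel-verified Lean document; each statement's English description precedes it below -/
import Mathlib

section
/- Let a > 0 and b > 0 be integers and x, y integers. Then a · 2^|x| < b · 2^|y| if and only if |x| < |y| + ⌈log₂(b/a)⌉, where ⌈log₂(b/a)⌉ is the least integer k such that a · 2^k ≥ b (this integer may be negative; interpret the inequality over ℤ). -/
theorem stmt_3 (a b : ℤ) (ha : 0 < a) (hb : 0 < b) (x y : ℤ) (k : ℤ)
    (hk : (b : ℚ) ≤ (a : ℚ) * 2 ^ k)
    (hmin : ∀ j : ℤ, j < k → (a : ℚ) * 2 ^ j < (b : ℚ)) :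
    a * 2 ^ x.natAbs < b * 2 ^ y.natAbs ↔ (x.natAbs : ℤ) < (y.natAbs : ℤ) + k := by
  have haQ : (0:ℚ) < (a:ℚ) := by exact_mod_cast ha
  set M : ℤ := (x.natAbs : ℤ) with hM
  set N : ℤ := (y.natAbs : ℤ) with hN
  have key : ((a:ℚ) * 2 ^ M < (b:ℚ) * 2 ^ N) ↔ M < N + k := by
    constructor
    · intro h
      by_contra hle
      push_neg at hle
      have hle2 : (b:ℚ) * 2 ^ N ≤ (a:ℚ) * 2 ^ M := by
        calc (b:ℚ) * 2 ^ N ≤ ((a:ℚ) * 2 ^ k) * 2 ^ N :=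
              mul_le_mul_of_nonneg_right hk (by positivity)
          _ = (a:ℚ) * 2 ^ (k + N) := by
              rw [mul_assoc, ← zpow_add₀ (by norm_num : (2:ℚ) ≠ 0)]
          _ ≤ (a:ℚ) * 2 ^ M := by
              apply mul_le_mul_of_nonneg_left _ haQ.le
              exact zpow_le_zpow_right₀ (by norm_num) (by linarith)
      linarith
    · intro h
      have hm : M ≤ N + (k - 1) := by linarith
      have hmin' := hmin (k-1) (by linarith)
      calc (a:ℚ) * 2 ^ M ≤ (a:ℚ) * 2 ^ (N + (k-1)) :=
            mul_le_mul_of_nonneg_left (zpow_le_zpow_right₀ (by norm_num) hm) haQ.le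
        _ = ((a:ℚ) * 2 ^ (k-1)) * 2 ^ N := by
            rw [mul_assoc, ← zpow_add₀ (by norm_num : (2:ℚ) ≠ 0), add_comm]
        _ < (b:ℚ) * 2 ^ N := mul_lt_mul_of_pos_right hmin' (by positivity)
  rw [← key]
  rw [show (a:ℚ) * 2 ^ M = ((a * 2 ^ x.natAbs : ℤ) : ℚ) by
        rw [hM, zpow_natCast]; push_cast; ring,
      show (b:ℚ) * 2 ^ N = ((b * 2 ^ y.natAbs : ℤ) : ℚ) by
        rw [hN, zpow_natCast]; push_cast; ring]
  exact_mod_cast Iff.rfl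
end

section
/- Let q be a positive integer, r ∈ [0, q), and suppose there exists s ≥ 0 with q ∣ 2^s − r. Let r' be the least such s, and suppose there exists t > 0 with q ∣ r·(2^t − 1); let q' be the least such t. Then for every natural number n, q divides 2^n − r if and only if q' divides n − r' and n ≥ r'. -/
theorem stmt_6 (q : ℕ) (hq : 1 ≤ q) (r : ℕ) (hr : r < q) (r' q' : ℕ)
    (hr'1 : (q : ℤ) ∣ 2 ^ r' - (r : ℤ))
    (hr'min : ∀ s : ℕ, (q : ℤ) ∣ 2 ^ s - (r : ℤ) → r' ≤ s)
    (hq'pos : 0 < q')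
    (hq'1 : (q : ℤ) ∣ (r : ℤ) * (2 ^ q' - 1))
    (hq'min : ∀ t : ℕ, 0 < t → (q : ℤ) ∣ (r : ℤ) * (2 ^ t - 1) → q' ≤ t) :
    ∀ n : ℕ, r' ≤ n → ((q : ℤ) ∣ 2 ^ n - (r : ℤ) ↔ q' ∣ n - r') := by
  have hmul : ∀ k : ℕ, (q : ℤ) ∣ (r : ℤ) * (2 ^ (q' * k) - 1) := by
    intro k
    induction k with
    | zero => simp
    | succ k ih =>
      have h : (r : ℤ) * (2 ^ (q' * (k+1)) - 1)
          = 2 ^ (q' * k) * ((r : ℤ) * (2 ^ q' - 1)) + (r : ℤ) * (2 ^ (q' * k) - 1) := by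
        rw [Nat.mul_succ, pow_add]; ring
      rw [h]
      exact dvd_add (Dvd.dvd.mul_left hq'1 _) ih
  intro n hn
  set m := n - r' with hm
  have hnm : n = r' + m := by omega
  have key : (2:ℤ) ^ n - (r:ℤ) = 2 ^ m * (2 ^ r' - (r:ℤ)) + (r:ℤ) * (2 ^ m - 1) := by
    rw [hnm, pow_add]; ring
  have step1 : ((q : ℤ) ∣ 2 ^ n - (r : ℤ)) ↔ (q:ℤ) ∣ (r:ℤ) * (2 ^ m - 1) := by
    rw [key]
    constructor
    · intro h
      have h2 := dvd_sub h (Dvd.dvd.mul_left hr'1 ((2:ℤ) ^ m))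
      simpa using h2
    · intro h
      exact dvd_add (Dvd.dvd.mul_left hr'1 _) h
  rw [step1]
  constructor
  · intro h
    by_contra hne
    have hu : m % q' ≠ 0 := fun h0 => hne (Nat.dvd_of_mod_eq_zero h0)
    have h2m : (2:ℤ) ^ m = 2 ^ (q' * (m / q')) * 2 ^ (m % q') := by
      have hdm : q' * (m / q') + m % q' = m := by
        exact Nat.div_add_mod m q'
      conv_lhs => rw [← hdm]
      rw [pow_add]
    have hdiv : (q:ℤ) ∣ (r:ℤ) * 2 ^ m - (r:ℤ) * 2 ^ (m % q') := by
      have h3 := (hmul (m / q')).mul_right ((2:ℤ) ^ (m % q'))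
      have heq : (r : ℤ) * (2 ^ (q' * (m / q')) - 1) * 2 ^ (m % q')
          = (r:ℤ) * 2 ^ m - (r:ℤ) * 2 ^ (m % q') := by
        rw [h2m]; ring
      rwa [heq] at h3
    have hfin : (q:ℤ) ∣ (r:ℤ) * (2 ^ (m % q') - 1) := by
      have h4 := dvd_sub h hdiv
      have heq : (r:ℤ) * (2 ^ m - 1) - ((r:ℤ) * 2 ^ m - (r:ℤ) * 2 ^ (m % q'))
          = (r:ℤ) * (2 ^ (m % q') - 1) := by ring
      rwa [heq] at h4
    have h5 := hq'min (m % q') (Nat.pos_of_ne_zero hu) hfin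
    have h6 := Nat.mod_lt m hq'pos
    omega
  · rintro ⟨k, hk⟩
    rw [hk]; exact hmul k
end
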